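/- For every natural number m, β(m) − α(m) = m^{m+1}, where α(m) := Σ_{k=0}^{m} C(m,k) k^k (m−k)^{m−k} and β(m) := Σ_{j=0}^{m} Σ_{k=0}^{m−j} C(m,j) C(m−j,k) j^j k^k (m−j−k)^{m−j−k} (with the convention 0^0 = 1). -/

import Mathlib

/-!
Write `n^{(t)} = n (n - 1) ⋯ (n - t + 1)` for the falling factorial. Abel's identity
`∑_{i+j=n} C(n,i) x (x+i)^{i-1} (y+j)^j = (x+y+n)^n` gives, by induction on `n` after splitting
`(x+i)^i = x (x+i)^{i-1} + i (x+i)^{i-1}`, the identity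
`∑_{i+j=n} C(n,i) (x+i)^i (y+j)^j = ∑_{i+j=n} n^{(i)} (x+y+n)^j`.
At `x = y = 0` it yields `α(m) = ∑_{t+s=m} m^{(t)} m^s`. Since `β(m) = ∑_j C(m,j) j^j α(m-j)`,
using it once more at `x = 0` collapses `β(m)` to `∑_{t+s=m} (t+1) m^{(t)} m^s`. Hence
`β(m) - α(m) = ∑_{t+s=m} t m^{(t)} m^s`, which telescopes to `m^{m+1}` because
`t m^{(t)} m^{m-t} = m^{(t)} m^{m+1-t} - m^{(t+1)} m^{m-t}`.
-/

open Finset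

theorem Finset.Nat.sum_antidiagonal_antidiagonal_assoc {M : Type*} [AddCommMonoid M] (n : ℕ)
    (f : ℕ → ℕ → ℕ → M) :
    ∑ p ∈ antidiagonal n, ∑ q ∈ antidiagonal p.1, f q.1 q.2 p.2 =
      ∑ p ∈ antidiagonal n, ∑ q ∈ antidiagonal p.2, f p.1 q.1 q.2 := by
  rw [sum_sigma', sum_sigma']
  refine sum_nbij' (fun x ↦ ⟨(x.2.1, x.2.2 + x.1.2), (x.2.2, x.1.2)⟩)
    (fun x ↦ ⟨(x.1.1 + x.2.1, x.2.2), (x.1.1, x.2.1)⟩) ?_ ?_ ?_ ?_ ?_ <;>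
    simp +contextual only [mem_sigma, HasAntidiagonal.mem_antidiagonal, Sigma.forall,
      Prod.forall, and_true, implies_true, and_imp] <;>
    omega

theorem Finset.Nat.sum_antidiagonal_antidiagonal_left_comm {M : Type*} [AddCommMonoid M] (n : ℕ)
    (f : ℕ → ℕ → ℕ → M) :
    ∑ p ∈ antidiagonal n, ∑ q ∈ antidiagonal p.2, f p.1 q.1 q.2 =
      ∑ p ∈ antidiagonal n, ∑ q ∈ antidiagonal p.2, f q.1 p.1 q.2 := by
  rw [← sum_antidiagonal_antidiagonal_assoc,
    ← sum_antidiagonal_antidiagonal_assoc (f := fun a b c ↦ f b a c)]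
  exact sum_congr rfl fun p _ ↦ (Nat.sum_antidiagonal_swap (f := fun q ↦ f q.1 q.2 p.2)).symm

theorem Nat.choose_mul_succ_mul_choose_eq (a c k : ℕ) :
    (a + k + 1).choose (a + c + 2) * ((a + c + 2) * (a + c + 1).choose a) =
      (a + k + 1).choose (a + 1) * k.choose (c + 1) * (a + 1) := by
  have h := Nat.choose_mul (n := a + k + 1) (k := a + c + 2) (s := a + 1) (by omega)
  rw [show a + k + 1 - (a + 1) = k by omega, show a + c + 2 - (a + 1) = c + 1 by omega] at h
  rw [Nat.add_one_mul_choose_eq (a + c + 1) a, ← mul_assoc, h]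

variable {R : Type*} [CommSemiring R]

def abelPoly (x : R) : ℕ → R
  | 0 => 1
  | i + 1 => x * (x + (i + 1)) ^ i

theorem choose_mul_choose_mul_pow_eq_choose_mul_abelPoly (a b k : ℕ) :
    ((a + k + 1).choose (a + b + 1) * (a + b).choose a * ((a + b + 1 : ℕ) : R) ^ b : R) =
      (a + k + 1).choose (a + 1) * k.choose b * abelPoly ((a : R) + 1) b := by
  cases b with
  | zero => simp [abelPoly]
  | succ c =>
    have h := congrArg (Nat.cast : ℕ → R) (Nat.choose_mul_succ_mul_choose_eq a c k)
    push_cast at h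
    calc _ = ((a + k + 1).choose (a + c + 2) * ((a + c + 2) * (a + c + 1).choose a) : R) *
          ((a : R) + c + 2) ^ c := by
          rw [show a + (c + 1) + 1 = a + c + 2 by ring, show a + (c + 1) = a + c + 1 by ring]
          push_cast
          ring
      _ = _ := by rw [h, abelPoly]; ring

theorem sum_antidiagonal_choose_succ_mul_abelPoly_succ (x y : R) (m : ℕ) :
    ∑ p ∈ antidiagonal m, (m + 1).choose (p.1 + 1) * abelPoly x (p.1 + 1) * (y + p.2) ^ p.2 =
      ∑ p ∈ antidiagonal m, (m + 1).choose (p.1 + 1) * x ^ (p.1 + 1) *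
        ∑ q ∈ antidiagonal p.2,
          p.2.choose q.1 * abelPoly ((p.1 : R) + 1) q.1 * (y + q.2) ^ q.2 := by
  calc _ = ∑ p ∈ antidiagonal m, ∑ q ∈ antidiagonal p.1,
        ((m + 1).choose (q.1 + q.2 + 1) * (q.1 + q.2).choose q.1 *
          ((q.1 + q.2 + 1 : ℕ) : R) ^ q.2) * x ^ (q.1 + 1) * (y + p.2) ^ p.2 := by
        refine sum_congr rfl fun p _ ↦ ?_
        rw [abelPoly, (Commute.all _ _).add_pow', mul_sum, mul_sum, sum_mul]
        refine sum_congr rfl ?_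
        rintro ⟨a, b⟩ hq
        rw [HasAntidiagonal.mem_antidiagonal] at hq
        rw [← hq, nsmul_eq_mul]
        push_cast
        ring
    _ = ∑ p ∈ antidiagonal m, ∑ q ∈ antidiagonal p.2,
        ((m + 1).choose (p.1 + q.1 + 1) * (p.1 + q.1).choose p.1 *
          ((p.1 + q.1 + 1 : ℕ) : R) ^ q.1) * x ^ (p.1 + 1) * (y + q.2) ^ q.2 :=
        Nat.sum_antidiagonal_antidiagonal_assoc m fun a b j ↦
          ((m + 1).choose (a + b + 1) * (a + b).choose a * ((a + b + 1 : ℕ) : R) ^ b) *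
            x ^ (a + 1) * (y + j) ^ j
    _ = _ := by
        refine sum_congr rfl fun p hp ↦ ?_
        rw [HasAntidiagonal.mem_antidiagonal] at hp
        subst hp
        rw [mul_sum]
        refine sum_congr rfl fun q _ ↦ ?_
        rw [choose_mul_choose_mul_pow_eq_choose_mul_abelPoly]
        ring

theorem abel_identity (x y : R) (n : ℕ) :
    ∑ p ∈ antidiagonal n, n.choose p.1 * abelPoly x p.1 * (y + p.2) ^ p.2 = (x + y + n) ^ n := by
  induction n using Nat.strong_induction_on generalizing x with
  | _ n ih =>
  cases n with
  | zero => simp [abelPoly]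
  | succ m =>
    have inner : ∀ p ∈ antidiagonal m,
        ∑ q ∈ antidiagonal p.2, p.2.choose q.1 * abelPoly ((p.1 : R) + 1) q.1 * (y + q.2) ^ q.2 =
          (y + (m + 1 : ℕ)) ^ p.2 := by
      intro p hp
      rw [HasAntidiagonal.mem_antidiagonal] at hp
      rw [ih p.2 (by omega), ← hp]
      push_cast
      ring
    rw [Nat.sum_antidiagonal_succ, sum_antidiagonal_choose_succ_mul_abelPoly_succ,
      sum_congr rfl fun p hp ↦ by rw [inner p hp], add_assoc x,
      (Commute.all x _).add_pow', Nat.sum_antidiagonal_succ]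
    simp only [abelPoly, Nat.choose_zero_right, nsmul_eq_mul]
    push_cast
    exact congrArg₂ (· + ·) (by ring) (sum_congr rfl fun p _ ↦ by ring)

theorem sum_antidiagonal_choose_mul_add_pow_self (x y : R) (n : ℕ) :
    ∑ p ∈ antidiagonal n, n.choose p.1 * (x + p.1) ^ p.1 * (y + p.2) ^ p.2 =
      ∑ p ∈ antidiagonal n, n.descFactorial p.1 * (x + y + n) ^ p.2 := by
  induction n generalizing x with
  | zero => simp
  | succ n ih =>
    have split : ∀ p ∈ antidiagonal n,
        ((n + 1).choose (p.1 + 1) * (x + (p.1 + 1 : ℕ)) ^ (p.1 + 1) * (y + p.2) ^ p.2 : R) =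
          (n + 1).choose (p.1 + 1) * abelPoly x (p.1 + 1) * (y + p.2) ^ p.2 +
            (n + 1) * (n.choose p.1 * (x + 1 + p.1) ^ p.1 * (y + p.2) ^ p.2) := by
      intro p _
      have h := congrArg (Nat.cast : ℕ → R) (Nat.add_one_mul_choose_eq n p.1)
      push_cast at h ⊢
      simp only [abelPoly, pow_succ, ← mul_assoc]
      rw [h]
      ring
    have abel := abel_identity x y (n + 1)
    rw [Nat.sum_antidiagonal_succ] at abel
    rw [Nat.sum_antidiagonal_succ, Nat.sum_antidiagonal_succ, sum_congr rfl split, sum_add_distrib,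
      ← add_assoc, ← mul_sum, ih]
    simp only [Nat.choose_zero_right, abelPoly, Nat.cast_one, one_mul, mul_one, pow_zero,
      Nat.descFactorial_zero, Nat.succ_descFactorial_succ] at abel ⊢
    rw [abel, mul_sum]
    push_cast
    exact congrArg _ (sum_congr rfl fun p _ ↦ by ring)

theorem Nat.choose_mul_descFactorial_eq (i j k : ℕ) :
    (i + j + k).choose j * (i + k).descFactorial i =
      (i + j + k).descFactorial i * (j + k).choose j := by
  have h := Nat.choose_mul (n := i + j + k) (k := i + k) (s := i) (by omega)
  rw [show i + j + k - i = j + k by omega, show i + k - i = k by omega,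
    ← Nat.choose_symm_of_eq_add (show i + j + k = j + (i + k) by ring),
    ← Nat.choose_symm_of_eq_add rfl] at h
  rw [Nat.descFactorial_eq_factorial_mul_choose, Nat.descFactorial_eq_factorial_mul_choose,
    mul_left_comm, h, mul_assoc]

theorem sum_antidiagonal_choose_mul_pow_self (n : ℕ) :
    ∑ p ∈ antidiagonal n, n.choose p.1 * p.1 ^ p.1 * p.2 ^ p.2 =
      ∑ p ∈ antidiagonal n, n.descFactorial p.1 * n ^ p.2 := by
  simpa using sum_antidiagonal_choose_mul_add_pow_self (0 : ℕ) 0 n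

theorem sum_antidiagonal_choose_mul_pow_self_mul_sum_descFactorial (m : ℕ) :
    ∑ p ∈ antidiagonal m, m.choose p.1 * p.1 ^ p.1 *
        ∑ q ∈ antidiagonal p.2, p.2.descFactorial q.1 * p.2 ^ q.2 =
      ∑ p ∈ antidiagonal m, (p.1 + 1) * (m.descFactorial p.1 * m ^ p.2) := by
  calc _ = ∑ p ∈ antidiagonal m, ∑ q ∈ antidiagonal p.2,
        m.choose p.1 * p.1 ^ p.1 * ((q.1 + q.2).descFactorial q.1 * (q.1 + q.2) ^ q.2) := by
        refine sum_congr rfl fun p _ ↦ ?_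
        rw [mul_sum]
        refine sum_congr rfl fun q hq ↦ ?_
        rw [HasAntidiagonal.mem_antidiagonal.1 hq]
    _ = ∑ p ∈ antidiagonal m, ∑ q ∈ antidiagonal p.2,
        m.choose q.1 * q.1 ^ q.1 * ((p.1 + q.2).descFactorial p.1 * (p.1 + q.2) ^ q.2) :=
        Nat.sum_antidiagonal_antidiagonal_left_comm m
          (fun j i k ↦ m.choose j * j ^ j * ((i + k).descFactorial i * (i + k) ^ k))
    _ = ∑ p ∈ antidiagonal m, m.descFactorial p.1 *
        ∑ q ∈ antidiagonal p.2, p.2.choose q.1 * (0 + q.1) ^ q.1 * (p.1 + q.2) ^ q.2 := by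
        refine sum_congr rfl fun p hp ↦ ?_
        rw [mul_sum]
        refine sum_congr rfl fun q hq ↦ ?_
        rw [HasAntidiagonal.mem_antidiagonal] at hp hq
        rw [← hp, ← hq, ← add_assoc, zero_add]
        calc _ = ((p.1 + q.1 + q.2).choose q.1 * (p.1 + q.2).descFactorial p.1) *
              (q.1 ^ q.1 * (p.1 + q.2) ^ q.2) := by ring
          _ = _ := by rw [Nat.choose_mul_descFactorial_eq]; ring
    _ = ∑ p ∈ antidiagonal m, ∑ q ∈ antidiagonal p.2, m.descFactorial (p.1 + q.1) * m ^ q.2 := by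
        refine sum_congr rfl fun p hp ↦ ?_
        rw [HasAntidiagonal.mem_antidiagonal] at hp
        have h := sum_antidiagonal_choose_mul_add_pow_self (0 : ℕ) p.1 p.2
        simp only [Nat.cast_id] at h
        rw [h, mul_sum, zero_add, hp]
        refine sum_congr rfl fun q _ ↦ ?_
        have hd :=
          Nat.descFactorial_mul_descFactorial (n := m) (k := p.1) (m := p.1 + q.1) (by omega)
        rw [Nat.add_sub_cancel_left, show m - p.1 = p.2 by omega] at hd
        rw [← hd]
        ring
    _ = ∑ p ∈ antidiagonal m, ∑ q ∈ antidiagonal p.1, m.descFactorial (q.1 + q.2) * m ^ p.2 :=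
        (Nat.sum_antidiagonal_antidiagonal_assoc m
          (fun i a b ↦ m.descFactorial (i + a) * m ^ b)).symm
    _ = _ := by
        refine sum_congr rfl fun p _ ↦ ?_
        rw [sum_congr rfl fun q hq ↦ by rw [HasAntidiagonal.mem_antidiagonal.1 hq], sum_const,
          Nat.card_antidiagonal, smul_eq_mul]

theorem sum_range_mul_descFactorial_mul_pow_add (m k : ℕ) (hk : k ≤ m + 1) :
    ∑ t ∈ range k, t * (m.descFactorial t * m ^ (m - t)) + m.descFactorial k * m ^ (m + 1 - k) =
      m ^ (m + 1) := by
  induction k with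
  | zero => simp
  | succ k ih =>
    have step : k * (m.descFactorial k * m ^ (m - k)) + m.descFactorial (k + 1) * m ^ (m - k) =
        m.descFactorial k * m ^ (m + 1 - k) := by
      rw [Nat.descFactorial_succ, show m + 1 - k = m - k + 1 by omega, pow_succ]
      calc _ = (k + (m - k)) * (m.descFactorial k * m ^ (m - k)) := by ring
        _ = _ := by rw [show k + (m - k) = m by omega]; ring
    rw [sum_range_succ, add_assoc, Nat.add_sub_add_right, step, ih (by omega)]

theorem sum_antidiagonal_mul_descFactorial_mul_pow (m : ℕ) :
    ∑ p ∈ antidiagonal m, p.1 * (m.descFactorial p.1 * m ^ p.2) = m ^ (m + 1) := by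
  have h := sum_range_mul_descFactorial_mul_pow_add m (m + 1) le_rfl
  rw [Nat.descFactorial_eq_zero_iff_lt.2 (by omega), zero_mul, add_zero] at h
  rw [Nat.sum_antidiagonal_eq_sum_range_succ (fun i j ↦ i * (m.descFactorial i * m ^ j)), h]

/-- For every natural number `m`, `β(m) - α(m) = m^{m+1}`. -/
theorem beta_sub_alpha (m : ℕ) :
    (∑ j ∈ Finset.range (m + 1), ∑ k ∈ Finset.range (m - j + 1),
      m.choose j * (m - j).choose k * j ^ j * k ^ k * (m - j - k) ^ (m - j - k)) -
    (∑ k ∈ Finset.range (m + 1), m.choose k * k ^ k * (m - k) ^ (m - k)) =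
    m ^ (m + 1) := by
  have hα : ∑ k ∈ range (m + 1), m.choose k * k ^ k * (m - k) ^ (m - k) =
      ∑ p ∈ antidiagonal m, m.descFactorial p.1 * m ^ p.2 := by
    rw [← sum_antidiagonal_choose_mul_pow_self,
      Nat.sum_antidiagonal_eq_sum_range_succ (fun i j ↦ m.choose i * i ^ i * j ^ j)]
  have hβ : ∑ j ∈ range (m + 1), ∑ k ∈ range (m - j + 1),
        m.choose j * (m - j).choose k * j ^ j * k ^ k * (m - j - k) ^ (m - j - k) =
      ∑ p ∈ antidiagonal m, (p.1 + 1) * (m.descFactorial p.1 * m ^ p.2) := by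
    rw [← sum_antidiagonal_choose_mul_pow_self_mul_sum_descFactorial,
      Nat.sum_antidiagonal_eq_sum_range_succ fun j l ↦
        m.choose j * j ^ j * ∑ q ∈ antidiagonal l, l.descFactorial q.1 * l ^ q.2]
    refine sum_congr rfl fun j _ ↦ ?_
    rw [← sum_antidiagonal_choose_mul_pow_self, Nat.sum_antidiagonal_eq_sum_range_succ
      (fun k l ↦ (m - j).choose k * k ^ k * l ^ l), mul_sum]
    exact sum_congr rfl fun k _ ↦ by ring
  simp only [hα, hβ, add_one_mul, sum_add_distrib, Nat.add_sub_cancel,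
    sum_antidiagonal_mul_descFactorial_mul_pow]
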